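/- Let M = {(x,y,z) ∈ ℝ³ : z < −1}, let μ, f, r : ℝ → ℝ be smooth, set λ(z) = √(−1−z), and define the vector fields on M (as smooth maps M → ℝ³) e₁ = (1, 0, 0), e₂ = (0, 1, 0), and e₃(x,y,z) = (x(1 + λ(z)) + f(z), y(1 − λ(z)) + r(z), −2(z+1)(μ(z)+2)). Then at every point p ∈ M the Lie brackets satisfy [e₁, e₂](p) = 0, [e₁, e₃](p) = (1 + λ(z))·e₁(p), and [e₂, e₃](p) = (1 − λ(z))·e₂(p). -/

import Mathlib

/-- `λ(z) = √(-1 - z)` -/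
noncomputable def lam (z : ℝ) : ℝ := Real.sqrt (-1 - z)

/-- The coordinate vector field `e₁ = ∂/∂x`. -/
noncomputable def e1 : (Fin 3 → ℝ) → (Fin 3 → ℝ) := fun _ => ![1, 0, 0]

/-- The coordinate vector field `e₂ = ∂/∂y`. -/
noncomputable def e2 : (Fin 3 → ℝ) → (Fin 3 → ℝ) := fun _ => ![0, 1, 0]

/-- The Reeb vector field
`e₃ = (x(1 + λ(z)) + f(z)) ∂x + (y(1 - λ(z)) + r(z)) ∂y - 2(z+1)(μ(z)+2) ∂z`
of the local model of a `3`-dimensional almost Kenmotsu generalized `(k,μ)'`-space. -/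
noncomputable def e3 (μ f r : ℝ → ℝ) : (Fin 3 → ℝ) → (Fin 3 → ℝ) :=
  fun p => ![p 0 * (1 + lam (p 2)) + f (p 2),
             p 1 * (1 - lam (p 2)) + r (p 2),
             -(2 * (p 2 + 1) * (μ (p 2) + 2))]

open ContinuousLinearMap in
theorem stmt_12 (μ f r : ℝ → ℝ)
    (hμ : ContDiff ℝ (⊤ : ℕ∞) μ) (hf : ContDiff ℝ (⊤ : ℕ∞) f) (hr : ContDiff ℝ (⊤ : ℕ∞) r) :
    ∀ p : Fin 3 → ℝ, p 2 < -1 →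
      VectorField.lieBracket ℝ e1 e2 p = 0 ∧
      VectorField.lieBracket ℝ e1 (e3 μ f r) p = (1 + lam (p 2)) • e1 p ∧
      VectorField.lieBracket ℝ e2 (e3 μ f r) p = (1 - lam (p 2)) • e2 p := by
  intro p hp
  have hne : (-1 - p 2) ≠ 0 := by linarith
  have hlin : HasDerivAt (fun t : ℝ => -1 - t) (-1) (p 2) := by
    simpa using (hasDerivAt_id (p 2)).const_sub (-1 : ℝ)
  have hlam : HasDerivAt lam (1 / (2 * Real.sqrt (-1 - p 2)) * (-1)) (p 2) := by
    rw [show lam = fun z => Real.sqrt (-1 - z) from rfl]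
    simpa [Function.comp_def] using (Real.hasDerivAt_sqrt hne).comp (p 2) hlin
  set l' : ℝ := 1 / (2 * Real.sqrt (-1 - p 2)) * (-1) with hl'
  have hproj0 : HasFDerivAt (fun q : Fin 3 → ℝ => q 0) (proj 0 : (Fin 3 → ℝ) →L[ℝ] ℝ) p :=
    hasFDerivAt_apply 0 p
  have hproj1 : HasFDerivAt (fun q : Fin 3 → ℝ => q 1) (proj 1 : (Fin 3 → ℝ) →L[ℝ] ℝ) p :=
    hasFDerivAt_apply 1 p
  have hproj2 : HasFDerivAt (fun q : Fin 3 → ℝ => q 2) (proj 2 : (Fin 3 → ℝ) →L[ℝ] ℝ) p :=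
    hasFDerivAt_apply 2 p
  have hlamp : HasFDerivAt (fun q : Fin 3 → ℝ => lam (q 2)) (l' • (proj 2 : (Fin 3 → ℝ) →L[ℝ] ℝ)) p :=
    by have := hlam.comp_hasFDerivAt p hproj2; exact this
  have hcomp : ∀ g : ℝ → ℝ, ContDiff ℝ (⊤ : ℕ∞) g →
      HasFDerivAt (fun q : Fin 3 → ℝ => g (q 2)) ((deriv g (p 2)) • (proj 2 : (Fin 3 → ℝ) →L[ℝ] ℝ)) p :=
    fun g hg => ((hg.differentiable (by simp) (p 2)).hasDerivAt).comp_hasFDerivAt p hproj2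
  set L0 : (Fin 3 → ℝ) →L[ℝ] ℝ :=
    (p 0 • (l' • (proj 2 : (Fin 3 → ℝ) →L[ℝ] ℝ)) + (1 + lam (p 2)) • proj 0) + deriv f (p 2) • proj 2 with hL0
  set L1 : (Fin 3 → ℝ) →L[ℝ] ℝ :=
    (p 1 • (-(l' • (proj 2 : (Fin 3 → ℝ) →L[ℝ] ℝ))) + (1 - lam (p 2)) • proj 1) + deriv r (p 2) • proj 2 with hL1
  have hg2 : ContDiff ℝ (⊤ : ℕ∞) (fun t : ℝ => -(2 * (t + 1) * (μ t + 2))) := by fun_prop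
  set L2 : (Fin 3 → ℝ) →L[ℝ] ℝ :=
    (deriv (fun t : ℝ => -(2 * (t + 1) * (μ t + 2))) (p 2)) • (proj 2 : (Fin 3 → ℝ) →L[ℝ] ℝ) with hL2
  have h0 : HasFDerivAt (fun q : Fin 3 → ℝ => q 0 * (1 + lam (q 2)) + f (q 2)) L0 p :=
    (hproj0.mul (hlamp.const_add 1)).add (hcomp f hf)
  have h1 : HasFDerivAt (fun q : Fin 3 → ℝ => q 1 * (1 - lam (q 2)) + r (q 2)) L1 p :=
    (hproj1.mul (hlamp.const_sub 1)).add (hcomp r hr)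
  have h2 : HasFDerivAt (fun q : Fin 3 → ℝ => -(2 * (q 2 + 1) * (μ (q 2) + 2))) L2 p :=
    hcomp _ hg2
  set D : Fin 3 → ((Fin 3 → ℝ) →L[ℝ] ℝ) := ![L0, L1, L2] with hD
  have hE3 : HasFDerivAt (e3 μ f r) (ContinuousLinearMap.pi D) p := by
    apply hasFDerivAt_pi'.2
    intro i
    fin_cases i <;>
      simp only [ContinuousLinearMap.proj_pi, hD, e3, Matrix.cons_val_zero, Matrix.cons_val_one,
        Matrix.head_cons, Matrix.cons_val_two, Matrix.tail_cons, Fin.isValue] <;>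
      [exact h0; exact h1; exact h2]
  have he1 : fderiv ℝ e1 p = 0 := (hasFDerivAt_const _ _).fderiv
  have he2 : fderiv ℝ e2 p = 0 := (hasFDerivAt_const _ _).fderiv
  refine ⟨?_, ?_, ?_⟩
  · simp [VectorField.lieBracket, he1, he2]
  · rw [VectorField.lieBracket]
    rw [he1, hE3.fderiv]
    funext i
    fin_cases i <;>
      simp [e1, hD, hL0, hL1, hL2]
  · rw [VectorField.lieBracket]
    rw [he2, hE3.fderiv]
    funext i
    fin_cases i <;>
      simp [e2, hD, hL0, hL1, hL2]
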